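/- arXiv:2406.18789 — 2 statements merged into one kernel-verified Lean document; each statement's English description precedes it below -/
import Mathlib

section
/- Let C ⊆ ℝⁿ be a polytope and f convex and differentiable on an open set containing C. For all x ∈ C \ X* and all S ∈ S(x), max_{a ∈ S, w ∈ C} ⟨∇f(x), a - w⟩ ≥ (f(x) - f*)/v(X*, x), where v is the vertex distance. -/
/-!
Let `M` be the maximum of `⟨∇f(x), a - w⟩` over `a ∈ S`, `w ∈ C`. If a minimiser `z` satisfies
`z - x = γ (w - u)` with `w ∈ C` and `u ∈ conv S`, the gradient inequality gives
`f x - f* ≤ ⟨∇f(x), x - z⟩ = γ ⟨∇f(x), u - w⟩ ≤ γ M`, since `u ↦ ⟨∇f(x), u - w⟩` is affine and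
bounded by `M` on `S`. Hence `(f x - f*) / M` is a lower bound for every step distance
`stepDist C (conv S) z x`, so for the vertex distance `v(z, x)` and for `v(X*, x)`; taking
`z - x = 1 • (z - x)` shows `M > 0`, and the claim follows by rearranging.
-/

/-- `min {γ ≥ 0 : y - x = γ (w - u) for some w ∈ C and u ∈ T}`. -/
noncomputable def stepDist {E : Type*} [NormedAddCommGroup E] [NormedSpace ℝ E]
    (C T : Set E) (y x : E) : ℝ :=
  sInf {γ : ℝ | 0 ≤ γ ∧ ∃ w ∈ C, ∃ u ∈ T, y - x = γ • (w - u)}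

/-- The collection `S(x)` of supports of convex-combination representations of `x`
by the vertices in `V`. -/
def supports {E : Type*} [NormedAddCommGroup E] [NormedSpace ℝ E]
    (V : Finset E) (x : E) : Set (Set E) :=
  {S | ∃ w : E → ℝ, (∀ v, 0 ≤ w v) ∧ (∑ v ∈ V, w v) = 1 ∧
    (∑ v ∈ V, w v • v) = x ∧ S = {v | v ∈ V ∧ 0 < w v}}

/-- The vertex distance. -/
noncomputable def vertexDist {E : Type*} [NormedAddCommGroup E] [NormedSpace ℝ E]
    (V : Finset E) (C : Set E) (y x : E) : ℝ :=
  sSup {g : ℝ | ∃ S ∈ supports V x, g = stepDist C (convexHull ℝ S) y x}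

theorem apply_sub_le_of_mem_convexHull {𝕜 E : Type*} [Field 𝕜] [LinearOrder 𝕜]
    [IsStrictOrderedRing 𝕜] [AddCommGroup E] [Module 𝕜 E] (ℓ : E →ₗ[𝕜] 𝕜) {S : Set E}
    {w u : E} {M : 𝕜} (h : ∀ a ∈ S, ℓ (a - w) ≤ M) (hu : u ∈ convexHull 𝕜 S) :
    ℓ (u - w) ≤ M := by
  have hhalf : Convex 𝕜 {p | ℓ p ≤ M + ℓ w} := convex_halfSpace_le ℓ.isLinear _
  have := convexHull_min (fun a ha => by simpa [map_sub, sub_le_iff_le_add] using h a ha) hhalf hu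
  simpa [map_sub, sub_le_iff_le_add] using this

theorem bddAbove_apply_sub {E : Type*} [TopologicalSpace E] [AddGroup E] [ContinuousSub E]
    {A B : Set E} (hA : IsCompact A) (hB : IsCompact B) {g : E → ℝ} (hg : Continuous g) :
    BddAbove {t | ∃ a ∈ A, ∃ w ∈ B, t = g (a - w)} := by
  refine ((hA.prod hB).bddAbove_image (by fun_prop : Continuous fun p : E × E =>
    g (p.1 - p.2)).continuousOn).mono ?_
  rintro t ⟨a, ha, w, hw, rfl⟩
  exact ⟨(a, w), ⟨ha, hw⟩, rfl⟩

section NormedSpace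

variable {E : Type*} [NormedAddCommGroup E] [NormedSpace ℝ E]

theorem ConvexOn.apply_sub_le_of_hasFDerivAt {C : Set E} {f : E → ℝ} {f' : E →L[ℝ] ℝ} {x z : E}
    (hf : ConvexOn ℝ C f) (hx : x ∈ C) (hz : z ∈ C) (hd : HasFDerivAt f f' x) :
    f' (z - x) ≤ f z - f x := by
  set l : ℝ →ᵃ[ℝ] E := AffineMap.lineMap x z
  have hline : ConvexOn ℝ (l ⁻¹' C) (f ∘ l) := hf.comp_affineMap l
  have hderiv : HasDerivAt (f ∘ l) (f' (z - x)) 0 :=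
    HasFDerivAt.comp_hasDerivAt 0 (by simpa [l] using hd) AffineMap.hasDerivAt_lineMap
  simpa [l, slope_def_field] using
    hline.le_slope_of_hasDerivAt (by simpa [l] using hx) (by simpa [l] using hz) zero_lt_one hderiv

theorem ConvexOn.sub_le_mul_of_sub_eq_smul {C S : Set E} {f : E → ℝ} {f' : E →L[ℝ] ℝ}
    {x z w u : E} {γ M : ℝ} (hf : ConvexOn ℝ C f)
    (hx : x ∈ C) (hz : z ∈ C) (hd : HasFDerivAt f f' x) (hM : ∀ a ∈ S, f' (a - w) ≤ M)
    (hγ : 0 ≤ γ) (hu : u ∈ convexHull ℝ S) (hzx : z - x = γ • (w - u)) :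
    f x - f z ≤ γ * M := by
  have hxz : x - z = γ • (u - w) := by rw [← neg_sub, hzx, ← smul_neg, neg_sub]
  calc f x - f z ≤ f' (x - z) := by
        have := hf.apply_sub_le_of_hasFDerivAt hx hz hd
        rw [← neg_sub, map_neg] at this
        linarith
    _ = γ * f' (u - w) := by rw [hxz, map_smul, smul_eq_mul]
    _ ≤ γ * M := mul_le_mul_of_nonneg_left
        (apply_sub_le_of_mem_convexHull (f' : E →ₗ[ℝ] ℝ) hM hu) hγ

theorem mem_convexHull_of_mem_supports {V : Finset E} {x : E} {S : Set E}
    (hS : S ∈ supports V x) : x ∈ convexHull ℝ S := by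
  obtain ⟨w, hw0, hw1, rfl, rfl⟩ := hS
  have hpos : ∀ v, w v ≠ 0 → 0 < w v := fun v hv => (hw0 v).lt_of_ne (Ne.symm hv)
  rw [← Finset.sum_filter_of_ne fun v _ hv => hpos v (left_ne_zero_of_smul hv)]
  rw [← Finset.sum_filter_of_ne fun v _ hv => hpos v hv] at hw1
  refine (convex_convexHull ℝ _).sum_mem (fun v _ => hw0 v) hw1 fun v hv => ?_
  exact subset_convexHull ℝ _ (Finset.mem_filter.mp hv)

theorem stepDist_le_one {C T : Set E} {y x : E} (hy : y ∈ C) (hx : x ∈ T) :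
    stepDist C T y x ≤ 1 :=
  csInf_le ⟨0, fun _ hγ => hγ.1⟩ ⟨zero_le_one, y, hy, x, hx, by simp⟩

theorem le_stepDist {C T : Set E} {y x : E} {c : ℝ} (hy : y ∈ C) (hx : x ∈ T)
    (h : ∀ γ, 0 ≤ γ → ∀ w ∈ C, ∀ u ∈ T, y - x = γ • (w - u) → c ≤ γ) :
    c ≤ stepDist C T y x :=
  le_csInf ⟨1, zero_le_one, y, hy, x, hx, by simp⟩ fun _ ⟨hγ, w, hw, u, hu, hyx⟩ =>
    h _ hγ w hw u hu hyx

theorem stepDist_le_vertexDist {V : Finset E} {C S : Set E} {y x : E} (hy : y ∈ C)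
    (hS : S ∈ supports V x) : stepDist C (convexHull ℝ S) y x ≤ vertexDist V C y x := by
  refine le_csSup ⟨1, ?_⟩ ⟨S, hS, rfl⟩
  rintro _ ⟨S', hS', rfl⟩
  exact stepDist_le_one hy (mem_convexHull_of_mem_supports hS')

theorem div_le_vertexDist {V : Finset E} {C S : Set E} {y x : E} {c M : ℝ} (hM : 0 < M)
    (hy : y ∈ C) (hS : S ∈ supports V x)
    (h : ∀ γ, 0 ≤ γ → ∀ w ∈ C, ∀ u ∈ convexHull ℝ S, y - x = γ • (w - u) → c ≤ γ * M) :
    c / M ≤ vertexDist V C y x := by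
  refine (le_stepDist hy (mem_convexHull_of_mem_supports hS) fun γ hγ w hw u hu hyx => ?_).trans
    (stepDist_le_vertexDist hy hS)
  rw [div_le_iff₀ hM]
  exact h γ hγ w hw u hu hyx

end NormedSpace

theorem stmt10_general {E : Type*} [NormedAddCommGroup E] [NormedSpace ℝ E]
    (V : Finset E) (C : Set E) (hC : C = convexHull ℝ (V : Set E))
    (f : E → ℝ) (f' : E → E →L[ℝ] ℝ) (hdiff : ∀ x ∈ C, HasFDerivAt f (f' x) x)
    (hconv : ConvexOn ℝ C f)
    (fstar : ℝ) (hfstar : IsLeast (f '' C) fstar)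
    (Xstar : Set E) (hXstar : Xstar = {z ∈ C | f z = fstar}) :
    ∀ x ∈ C, x ∉ Xstar → ∀ S ∈ supports V x,
      sSup {t : ℝ | ∃ a ∈ S, ∃ w ∈ C, t = f' x (a - w)} ≥
        (f x - fstar) / sInf {d : ℝ | ∃ z ∈ Xstar, d = vertexDist V C z x} := by
  subst hXstar
  intro x hxC hxX S hS
  set M := sSup {t : ℝ | ∃ a ∈ S, ∃ w ∈ C, t = f' x (a - w)}
  have hSV : S ⊆ V := by
    obtain ⟨_, -, -, -, rfl⟩ := hS
    exact fun v hv => hv.1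
  have hCcpt : IsCompact C := hC ▸ V.finite_toSet.isCompact_convexHull (𝕜 := ℝ)
  have hM : ∀ a ∈ S, ∀ w ∈ C, f' x (a - w) ≤ M := fun a ha w hw =>
    le_csSup (bddAbove_apply_sub (V.finite_toSet.subset hSV).isCompact hCcpt (f' x).continuous)
      ⟨a, ha, w, hw, rfl⟩
  have hxS : x ∈ convexHull ℝ S := mem_convexHull_of_mem_supports hS
  have hdescent : ∀ z ∈ C, ∀ γ, 0 ≤ γ → ∀ w ∈ C, ∀ u ∈ convexHull ℝ S,
      z - x = γ • (w - u) → f x - f z ≤ γ * M := fun z hz γ hγ w hw u hu hzx =>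
    hconv.sub_le_mul_of_sub_eq_smul hxC hz (hdiff x hxC) (hM · · w hw) hγ hu hzx
  obtain ⟨z₀, hz₀, hfz₀⟩ := hfstar.1
  have hgap : 0 < f x - fstar :=
    sub_pos.2 ((hfstar.2 ⟨x, hxC, rfl⟩).lt_of_ne fun h => hxX ⟨hxC, h.symm⟩)
  have hMpos : 0 < M := by
    have := hdescent z₀ hz₀ 1 zero_le_one z₀ hz₀ x hxS (by simp)
    linarith
  have hD : (f x - fstar) / M ≤
      sInf {d : ℝ | ∃ z ∈ {z ∈ C | f z = fstar}, d = vertexDist V C z x} := by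
    refine le_csInf ⟨_, z₀, ⟨hz₀, hfz₀⟩, rfl⟩ ?_
    rintro _ ⟨z, ⟨hz, rfl⟩, rfl⟩
    exact div_le_vertexDist hMpos hz hS (hdescent z hz)
  rw [ge_iff_le, div_le_comm₀ ((div_pos hgap hMpos).trans_le hD) hMpos]
  exact hD

/-- Scaling lemma for the vertex distance: for `x ∈ C \ X*` and `S ∈ S(x)`,
`max_{a ∈ S, w ∈ C} ⟨∇f(x), a - w⟩ ≥ (f(x) - f*) / v(X*, x)`. -/
theorem stmt10 {E : Type*} [NormedAddCommGroup E] [NormedSpace ℝ E]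
    (V : Finset E) (C : Set E) (hC : C = convexHull ℝ (V : Set E)) (hCne : C.Nonempty)
    (hV : (V : Set E) = Set.extremePoints ℝ C)
    (f : E → ℝ) (f' : E → E →L[ℝ] ℝ) (hdiff : ∀ x ∈ C, HasFDerivAt f (f' x) x)
    (hconv : ConvexOn ℝ C f)
    (fstar : ℝ) (hfstar : IsLeast (f '' C) fstar)
    (Xstar : Set E) (hXstar : Xstar = {z ∈ C | f z = fstar}) :
    ∀ x ∈ C, x ∉ Xstar → ∀ S ∈ supports V x,
      sSup {t : ℝ | ∃ a ∈ S, ∃ w ∈ C, t = f' x (a - w)} ≥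
        (f x - fstar) / sInf {d : ℝ | ∃ z ∈ Xstar, d = vertexDist V C z x} :=
  stmt10_general V C hC f f' hdiff hconv fstar hfstar Xstar hXstar
end

section
/- Let ℝⁿ be endowed with a norm and C ⊆ ℝⁿ a nonempty polytope. Then for all x, y ∈ C, ‖y - x‖ ≥ f(y, x) · Φ̄(F(y), C), where f is the face distance f(y, x) = min{γ ≥ 0 : y - x = γ(w - u) for some w ∈ C and u ∈ F(x)}, and Φ̄ is the outer facial distance. -/
/-- Distance between two sets: `min_{a ∈ A, b ∈ B} ‖a - b‖`. -/
noncomputable def setDist' {E : Type*} [NormedAddCommGroup E] [NormedSpace ℝ E]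
    (A B : Set E) : ℝ :=
  sInf {d : ℝ | ∃ a ∈ A, ∃ b ∈ B, d = ‖a - b‖}

/-- The minimal face of `C` containing `y` (faces of a polytope are its nonempty
extreme subsets). -/
def minFace {E : Type*} [NormedAddCommGroup E] [NormedSpace ℝ E]
    (C : Set E) (y : E) : Set E :=
  ⋂₀ {F : Set E | IsExtreme ℝ C F ∧ y ∈ F}

/-- The face distance
`f(y, x) = min {γ ≥ 0 : y - x = γ (w - u), w ∈ C, u ∈ F(x)}`. -/
noncomputable def faceDist {E : Type*} [NormedAddCommGroup E] [NormedSpace ℝ E]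
    (C : Set E) (y x : E) : ℝ :=
  sInf {γ : ℝ | 0 ≤ γ ∧ ∃ w ∈ C, ∃ u ∈ minFace C x, y - x = γ • (w - u)}

/-- The outer facial distance
`Φ̄(F, C) = min {dist(G, H) : G ∈ faces(F), H ∈ faces(C), G ∩ H = ∅}`. -/
noncomputable def outerFacial {E : Type*} [NormedAddCommGroup E] [NormedSpace ℝ E]
    (F C : Set E) : ℝ :=
  sInf {d : ℝ | ∃ G H : Set E, IsExtreme ℝ F G ∧ G.Nonempty ∧
    IsExtreme ℝ C H ∧ H.Nonempty ∧ G ∩ H = ∅ ∧ d = setDist' G H}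

/-!
Among all ways of writing `ρ • (y - x)` with `ρ ≥ 1` as a difference `w - u` with `w ∈ F(y)`
and `u ∈ F(x)`, pick one with `ρ` maximal; it exists because faces of a polytope are polytopes,
hence compact. Maximality forces `F(w) ∩ F(u) = ∅`: from a common point `p`, both `w` and `u` can
be pushed away from `p` by the same factor `1 + ε` without leaving their faces, which would
multiply `ρ` by `1 + ε`. So `F(w)` is a face of `F(y)` disjoint from the face `F(u)` of `C`,
whence `Φ̄(F(y), C) ≤ ‖w - u‖ = ρ ‖y - x‖`, while `f(y, x) ≤ ρ⁻¹` as `y - x = ρ⁻¹ • (w - u)`.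
-/

open Set Topology
open scoped Pointwise

section Extreme

variable {𝕜 E : Type*} [Field 𝕜] [LinearOrder 𝕜] [IsStrictOrderedRing 𝕜] [AddCommGroup E]
  [Module 𝕜 E] {A F s : Set E}

/-- Splitting `s` into `s ∩ F` and `s \ F`, a point of `F` on a segment joining the two hulls
must be its first endpoint, because `A \ F` is convex. -/
theorem IsExtreme.inter_convexHull_subset (hA : Convex 𝕜 A) (hF : IsExtreme 𝕜 A F)
    (hs : s ⊆ A) : F ∩ convexHull 𝕜 s ⊆ convexHull 𝕜 (s ∩ F) := by
  rintro z ⟨hzF, hzs⟩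
  have hout : convexHull 𝕜 (s \ F) ⊆ A \ F :=
    convexHull_min (sdiff_subset_sdiff_left hs) (hF.convex_sdiff hA)
  rcases (s \ F).eq_empty_or_nonempty with hsF | hsF
  · rwa [inter_eq_left.2 (sdiff_eq_empty.1 hsF)]
  rcases (s ∩ F).eq_empty_or_nonempty with hFs | hFs
  · rw [← sdiff_self_inter, hFs, sdiff_empty] at hout
    exact absurd hzF (hout hzs).2
  rw [← inter_union_sdiff s F, convexHull_union hFs hsF, mem_convexJoin] at hzs
  obtain ⟨a, ha, b, hb, hzab⟩ := hzs
  have haA : a ∈ A := convexHull_min (inter_subset_left.trans hs) hA ha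
  rw [← insert_endpoints_openSegment] at hzab
  rcases hzab with rfl | rfl | hzab
  · exact ha
  · exact absurd hzF (hout hb).2
  · exact absurd (hF.right_mem_of_mem_openSegment haA (hout hb).1 hzF hzab) (hout hb).2

theorem IsExtreme.eq_convexHull_inter (hF : IsExtreme 𝕜 (convexHull 𝕜 s) F)
    (hFc : Convex 𝕜 F) : F = convexHull 𝕜 (s ∩ F) :=
  Subset.antisymm (fun _ hz ↦ hF.inter_convexHull_subset (convex_convexHull 𝕜 s)
    (subset_convexHull 𝕜 s) ⟨hz, hF.subset hz⟩) (convexHull_min inter_subset_right hFc)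

end Extreme

section Faces

variable {E : Type*} [NormedAddCommGroup E] [NormedSpace ℝ E] {C : Set E} {x y p : E}

lemma mem_minFace_self : x ∈ minFace C x := fun _ hF ↦ hF.2

lemma minFace_subset_of_isExtreme {F : Set E} (hF : IsExtreme ℝ C F) (hx : x ∈ F) :
    minFace C x ⊆ F :=
  sInter_subset_of_mem ⟨hF, hx⟩

lemma isExtreme_minFace (hx : x ∈ C) : IsExtreme ℝ C (minFace C x) :=
  isExtreme_sInter ⟨C, IsExtreme.rfl, hx⟩ fun _ hF ↦ hF.1

lemma minFace_subset (hx : x ∈ C) : minFace C x ⊆ C :=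
  (isExtreme_minFace hx).subset

lemma isExtreme_minFace_of_mem (hy : y ∈ C) (hx : x ∈ minFace C y) :
    IsExtreme ℝ (minFace C y) (minFace C x) :=
  (isExtreme_minFace (minFace_subset hy hx)).mono (minFace_subset hy)
    (minFace_subset_of_isExtreme (isExtreme_minFace hy) hx)

lemma mem_openSegment_add_smul_sub (p x : E) {ε : ℝ} (hε : 0 < ε) :
    x ∈ openSegment ℝ p (x + ε • (x - p)) :=
  ⟨ε / (1 + ε), 1 / (1 + ε), by positivity, by positivity, by field_simp; ring, by
    match_scalars
    · ring
    · field_simp⟩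

/-- If `x + ε (x - p) ∈ C` and `p = s a + t b`, then going from `x` away from `a` by
`ε s / (1 + ε t)` lands on the convex combination `(q + ε t b) / (1 + ε t)` of
`q = x + ε (x - p)` and `b`. -/
lemma isExtreme_setOf_add_smul_sub_mem (hC : Convex ℝ C) :
    IsExtreme ℝ C {p | p ∈ C ∧ ∃ ε : ℝ, 0 < ε ∧ x + ε • (x - p) ∈ C} := by
  refine ⟨fun p hp ↦ hp.1, ?_⟩
  rintro a ha b hb p ⟨-, ε, hε, hq⟩ ⟨s, t, hs, ht, hst, rfl⟩
  refine ⟨ha, ε * s / (1 + ε * t), by positivity, ?_⟩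
  convert hC hq hb (a := 1 / (1 + ε * t)) (b := ε * t / (1 + ε * t)) (by positivity)
    (by positivity) (by field_simp) using 1
  match_scalars <;> field_simp
  · linear_combination ε * hst
  · ring

lemma mem_minFace_iff (hC : Convex ℝ C) (hx : x ∈ C) :
    p ∈ minFace C x ↔ p ∈ C ∧ ∃ ε : ℝ, 0 < ε ∧ x + ε • (x - p) ∈ C := by
  refine ⟨fun hp ↦ minFace_subset_of_isExtreme (isExtreme_setOf_add_smul_sub_mem hC)
    ⟨hx, 1, one_pos, by simpa using hx⟩ hp, ?_⟩
  rintro ⟨hp, ε, hε, hq⟩ F ⟨hF, hxF⟩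
  exact hF.left_mem_of_mem_openSegment hp hq hxF (mem_openSegment_add_smul_sub p x hε)

lemma eventually_add_smul_sub_mem (hC : Convex ℝ C) (hx : x ∈ C) (hp : p ∈ minFace C x) :
    ∀ᶠ ε : ℝ in 𝓝[>] 0, x + ε • (x - p) ∈ C := by
  obtain ⟨-, ε, hε, hq⟩ := (mem_minFace_iff hC hx).1 hp
  filter_upwards [Ioc_mem_nhdsGT hε] with δ hδ
  have h := hC.add_smul_mem hx hq (t := δ / ε)
    ⟨by positivity [hδ.1], div_le_one_of_le₀ hδ.2 hε.le⟩
  rwa [smul_smul, div_mul_cancel₀ _ hε.ne'] at h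

lemma convex_minFace (hC : Convex ℝ C) (hx : x ∈ C) : Convex ℝ (minFace C x) := by
  intro p hp q hq a b ha hb hab
  obtain ⟨ε, ⟨hpε, hqε⟩, hε⟩ := ((eventually_add_smul_sub_mem hC hx hp).and
    (eventually_add_smul_sub_mem hC hx hq) |>.and self_mem_nhdsWithin).exists
  refine (mem_minFace_iff hC hx).2
    ⟨hC (minFace_subset hx hp) (minFace_subset hx hq) ha hb hab, ε, hε, ?_⟩
  convert hC hpε hqε ha hb hab using 1
  linear_combination (norm := module) -(hab • ((1 + ε) • x))

lemma isCompact_minFace {V : Set E} (hV : V.Finite) (hx : x ∈ convexHull ℝ V) :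
    IsCompact (minFace (convexHull ℝ V) x) := by
  rw [(isExtreme_minFace hx).eq_convexHull_inter (convex_minFace (convex_convexHull ℝ V) hx)]
  exact (hV.inter_of_left _).isCompact_convexHull ℝ

lemma setDist'_nonneg (A B : Set E) : 0 ≤ setDist' A B :=
  Real.sInf_nonneg (by rintro d ⟨a, -, b, -, rfl⟩; exact norm_nonneg _)

lemma setDist'_le {A B : Set E} {a b : E} (ha : a ∈ A) (hb : b ∈ B) :
    setDist' A B ≤ ‖a - b‖ :=
  csInf_le ⟨0, by rintro d ⟨a, -, b, -, rfl⟩; exact norm_nonneg _⟩ ⟨a, ha, b, hb, rfl⟩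

lemma outerFacial_nonneg (F : Set E) : 0 ≤ outerFacial F C :=
  Real.sInf_nonneg (by rintro d ⟨G, H, -, -, -, -, -, rfl⟩; exact setDist'_nonneg G H)

lemma outerFacial_le {F G H : Set E} (hG : IsExtreme ℝ F G) (hGne : G.Nonempty)
    (hH : IsExtreme ℝ C H) (hHne : H.Nonempty) (hGH : G ∩ H = ∅) :
    outerFacial F C ≤ setDist' G H :=
  csInf_le ⟨0, fun _ ⟨G, H, _, _, _, _, _, hd⟩ ↦ hd ▸ setDist'_nonneg G H⟩
    ⟨G, H, hG, hGne, hH, hHne, hGH, rfl⟩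

lemma faceDist_le {w u : E} {γ : ℝ} (hγ : 0 ≤ γ) (hw : w ∈ C)
    (hu : u ∈ minFace C x) (h : y - x = γ • (w - u)) : faceDist C y x ≤ γ :=
  csInf_le ⟨0, fun _ hγ' ↦ hγ'.1⟩ ⟨hγ, w, hw, u, hu, h⟩

lemma exists_isGreatest_one_le_smul_mem {K : Set E} (hK : IsCompact K) {d : E} (hd : d ≠ 0)
    (hdK : d ∈ K) : ∃ ρ, IsGreatest {r : ℝ | 1 ≤ r ∧ r • d ∈ K} ρ := by
  have hS := ((isClosedEmbedding_smul_left hd).isCompact_preimage hK).inter_left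
    (isClosed_Ici (a := (1 : ℝ)))
  exact hS.exists_isGreatest ⟨1, self_mem_Ici, by simpa using hdK⟩

lemma minFace_inter_minFace_eq_empty {G H : Set E} (hC : Convex ℝ C) (hG : IsExtreme ℝ C G)
    (hH : IsExtreme ℝ C H) {w u d : E} {ρ : ℝ} (hw : w ∈ G) (hu : u ∈ H) (hρ : 0 < ρ)
    (hwu : w - u = ρ • d) (hmax : ∀ r > ρ, r • d ∉ G - H) : minFace C w ∩ minFace C u = ∅ := by
  refine eq_empty_of_forall_notMem fun p ⟨hpw, hpu⟩ ↦ ?_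
  have hwC := hG.subset hw
  have huC := hH.subset hu
  have hpC := minFace_subset hwC hpw
  obtain ⟨ε, ⟨hwε, huε⟩, hε⟩ := ((eventually_add_smul_sub_mem hC hwC hpw).and
    (eventually_add_smul_sub_mem hC huC hpu) |>.and self_mem_nhdsWithin).exists
  have hwεG := hG.right_mem_of_mem_openSegment hpC hwε hw (mem_openSegment_add_smul_sub p w hε)
  have huεH := hH.right_mem_of_mem_openSegment hpC huε hu (mem_openSegment_add_smul_sub p u hε)
  refine hmax ((1 + ε) * ρ) (lt_mul_of_one_lt_left hρ (by linarith)) ⟨_, hwεG, _, huεH, ?_⟩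
  rw [mul_smul, ← hwu]
  module

end Faces

theorem stmt13_general {E : Type*} [NormedAddCommGroup E] [NormedSpace ℝ E]
    (V : Finset E) (C : Set E) (hC : C = convexHull ℝ (V : Set E)) :
    ∀ x ∈ C, ∀ y ∈ C,
      ‖y - x‖ ≥ faceDist C y x * outerFacial (minFace C y) C := by
  intro x hx y hy
  rcases eq_or_ne y x with rfl | hyx
  · simpa using mul_nonpos_of_nonpos_of_nonneg
      (faceDist_le le_rfl hy mem_minFace_self (by simp)) (outerFacial_nonneg _)
  have hconv : Convex ℝ C := hC ▸ convex_convexHull ℝ _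
  have hcompact {z} (hz : z ∈ C) : IsCompact (minFace C z) :=
    hC ▸ isCompact_minFace V.finite_toSet (hC ▸ hz)
  have hK : IsCompact (minFace C y - minFace C x) := by
    rw [← sub_image_prod]
    exact ((hcompact hy).prod (hcompact hx)).image continuous_sub
  obtain ⟨ρ, ⟨hρ1, hρK⟩, hmax⟩ := exists_isGreatest_one_le_smul_mem hK (sub_ne_zero.2 hyx)
    ⟨y, mem_minFace_self, x, mem_minFace_self, rfl⟩
  obtain ⟨w, hw, u, hu, hwu⟩ := mem_sub.1 hρK
  have hρ : 0 < ρ := one_pos.trans_le hρ1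
  have hwC := minFace_subset hy hw
  have hdisj := minFace_inter_minFace_eq_empty hconv (isExtreme_minFace hy)
    (isExtreme_minFace hx) hw hu hρ hwu
    fun r hr hrK ↦ (hmax ⟨hρ1.trans hr.le, hrK⟩).not_gt hr
  calc faceDist C y x * outerFacial (minFace C y) C ≤ ρ⁻¹ * ‖w - u‖ := by
        refine mul_le_mul (faceDist_le (by positivity) hwC hu ?_) ?_
          (outerFacial_nonneg _) (by positivity)
        · rw [hwu, inv_smul_smul₀ hρ.ne']
        · exact (outerFacial_le (isExtreme_minFace_of_mem hy hw) ⟨w, mem_minFace_self⟩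
            (isExtreme_minFace (minFace_subset hx hu)) ⟨u, mem_minFace_self⟩ hdisj).trans
            (setDist'_le mem_minFace_self mem_minFace_self)
    _ = ‖y - x‖ := by
        rw [hwu, norm_smul, Real.norm_of_nonneg hρ.le, inv_mul_cancel_left₀ hρ.ne']

/-- For all `x, y` in a polytope `C`: `‖y - x‖ ≥ f(y, x) · Φ̄(F(y), C)`. -/
theorem stmt13 {E : Type*} [NormedAddCommGroup E] [NormedSpace ℝ E]
    (V : Finset E) (C : Set E) (hC : C = convexHull ℝ (V : Set E)) (hCne : C.Nonempty) :
    ∀ x ∈ C, ∀ y ∈ C,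
      ‖y - x‖ ≥ faceDist C y x * outerFacial (minFace C y) C :=
  stmt13_general V C hC
end
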